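/- arXiv:1912.00723 — 2 statements merged into one kernel-verified Lean document; each statement's English description precedes it below -/
import Mathlib

section
/- In the IRL1 setting with level-set boundedness, either the sequence {x^k} converges (i.e., has a unique limit point), or the set Ω of its limit points is a compact connected set, all of whose elements have the same sign pattern (hence Ω is contained in the closure of a single orthant with common support I*), and the objective F(x) = f(x) + λ Σ_{i=1}^n |x_i|^p takes the same value at every point of Ω. -/
open Filter Topology

/-- The weight function `w(t, s) = p(|t| + s)^(p-1)`. -/
noncomputable def wfun (p t s : ℝ) : ℝ := p * (|t| + s) ^ (p - 1)

/-- The IRL1 setting (Algorithm 2.1 of the paper): fixed data `p ∈ (0,1)`, `λ > 0`,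
`μ ∈ (0,1)`, a differentiable `f` with `Lf`-Lipschitz gradient (`Lf ≥ 0`), iterates
`x^k`, positive parameters `ε^k` with `ε^{k+1} ≤ μ ε^k` componentwise, and for each `k`
a differentiable model `Q_k` with `∇Q_k(x^k) = ∇f(x^k)`, `M`-strongly convex with
`M > Lf/2` (strong convexity meaning `z ↦ Q_k z - (M/2)‖z‖²` is convex), `∇Q_k`
`L`-Lipschitz, such that `x^{k+1}` is a global minimizer of
`G(·; x^k, ε^k) = Q_k(·) + λ Σᵢ w(xᵢ^k, εᵢ^k)|·ᵢ|`. -/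
structure IRL1 (n : ℕ) where
  p : ℝ
  lam : ℝ
  mu : ℝ
  Lf : ℝ
  M : ℝ
  L : ℝ
  f : EuclideanSpace ℝ (Fin n) → ℝ
  x : ℕ → EuclideanSpace ℝ (Fin n)
  eps : ℕ → Fin n → ℝ
  Q : ℕ → EuclideanSpace ℝ (Fin n) → ℝ
  hp0 : 0 < p
  hp1 : p < 1
  hlam : 0 < lam
  hmu0 : 0 < mu
  hmu1 : mu < 1
  hLf : 0 ≤ Lf
  hM : Lf / 2 < M
  hf_diff : Differentiable ℝ f
  hf_lip : ∀ a b, ‖gradient f a - gradient f b‖ ≤ Lf * ‖a - b‖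
  heps_pos : ∀ k i, 0 < eps k i
  heps_dec : ∀ k i, eps (k + 1) i ≤ mu * eps k i
  hQ_diff : ∀ k, Differentiable ℝ (Q k)
  hQ_grad : ∀ k, gradient (Q k) (x k) = gradient f (x k)
  hQ_sconv : ∀ k, ConvexOn ℝ Set.univ (fun z => Q k z - M / 2 * ‖z‖ ^ 2)
  hQ_lip : ∀ k a b, ‖gradient (Q k) a - gradient (Q k) b‖ ≤ L * ‖a - b‖
  hmin : ∀ k, ∀ z : EuclideanSpace ℝ (Fin n),
    Q k (x (k + 1)) + lam * ∑ i, wfun p (x k i) (eps k i) * |x (k + 1) i|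
      ≤ Q k z + lam * ∑ i, wfun p (x k i) (eps k i) * |z i|

/-- The smoothed objective `F(x, ε) = f(x) + λ Σᵢ (|xᵢ| + εᵢ)^p`. -/
noncomputable def IRL1.Feps {n : ℕ} (S : IRL1 n)
    (z : EuclideanSpace ℝ (Fin n)) (e : Fin n → ℝ) : ℝ :=
  S.f z + S.lam * ∑ i, (|z i| + e i) ^ S.p

/-- The objective `F(x) = f(x) + λ Σᵢ |xᵢ|^p`. -/
noncomputable def IRL1.Fobj {n : ℕ} (S : IRL1 n) (z : EuclideanSpace ℝ (Fin n)) : ℝ :=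
  S.f z + S.lam * ∑ i, |z i| ^ S.p

/-- The subproblem objective `G(z; x^k, ε^k)`. -/
noncomputable def IRL1.G {n : ℕ} (S : IRL1 n) (k : ℕ)
    (z : EuclideanSpace ℝ (Fin n)) : ℝ :=
  S.Q k z + S.lam * ∑ i, wfun S.p (S.x k i) (S.eps k i) * |z i|

/-- The level set `{x : F(x) ≤ F(x⁰, ε⁰)}` is bounded. -/
def IRL1.LevelBounded {n : ℕ} (S : IRL1 n) : Prop :=
  Bornology.IsBounded {z : EuclideanSpace ℝ (Fin n) | S.Fobj z ≤ S.Feps (S.x 0) (S.eps 0)}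

/-- The set of cluster points (limits of convergent subsequences) of a sequence. -/
def clusterSet {n : ℕ} (x : ℕ → EuclideanSpace ℝ (Fin n)) : Set (EuclideanSpace ℝ (Fin n)) :=
  {z | ∃ φ : ℕ → ℕ, StrictMono φ ∧ Tendsto (fun k => x (φ k)) atTop (nhds z)}


/-!
Each step decreases the smoothed objective,
`F(x^{k+1}, ε^{k+1}) ≤ F(x^k, ε^k) - (M - L_f/2) ‖x^{k+1} - x^k‖²`: concavity of `t ↦ t^p` bounds
the new penalty by its linearization at `|x^k| + ε^k`, whose slopes are exactly the weights `w`;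
the descent lemma bounds `f` by the model `Q_k`; and `G_k` grows quadratically around its
minimizer `x^{k+1}` by strong convexity. With a bounded level set, `F(x^k, ε^k)` therefore
converges and the steps `x^{k+1} - x^k` tend to zero. So the cluster set `Ω` is compact and
connected (a sequence with vanishing steps cannot jump between two separated pieces of `Ω`), and
`F = lim F(x^k, ε^k)` on `Ω` since `ε^k → 0`.

For the signs: if `x^{k+1}_i ≠ 0`, first-order optimality of `G_k` in the `i`-th coordinate bounds
the weight `λ w(x^k_i, ε^k_i)` by `‖∇Q_k(x^{k+1})‖`, which is uniformly bounded; as `w` blows up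
at zero, `|x^k_i| + ε^k_i` stays above a fixed threshold. Since `ε^k → 0` and the steps vanish,
each coordinate eventually either stays at zero or stays away from zero with a fixed sign, and
this sign is inherited by every cluster point.
-/

open InnerProductSpace Set Metric

section Calculus

variable {E : Type*} [NormedAddCommGroup E] [InnerProductSpace ℝ E]

theorem StrongConvexOn.add_sq_norm_sub_le_of_forall_le {G : E → ℝ} {m : ℝ}
    (hG : StrongConvexOn univ m G) {x : E} (hx : ∀ z, G x ≤ G z) (z : E) :
    G x + m / 2 * ‖z - x‖ ^ 2 ≤ G z := by
  set c := m / 2 * ‖z - x‖ ^ 2 with hc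
  -- compare `x` with `(1 - t) • x + t • z`, then let `t → 0`
  have key : ∀ t ∈ Ioc (0 : ℝ) 1, G x + c - G z ≤ t * c := fun t ⟨ht0, ht1⟩ => by
    have hmid := hG.2 (mem_univ x) (mem_univ z) (sub_nonneg.2 ht1) ht0.le (sub_add_cancel 1 t)
    have hmin := hx ((1 - t) • x + t • z)
    rw [norm_sub_rev] at hmid
    simp only [smul_eq_mul, ← hc] at hmid
    refine le_of_mul_le_mul_left ?_ ht0
    nlinarith
  have hlim : Tendsto (fun t : ℝ => t * c) (𝓝[>] 0) (𝓝 0) := by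
    simpa using (tendsto_id.mul_const c).mono_left (nhdsWithin_le_nhds (a := (0 : ℝ)))
  have := ge_of_tendsto hlim (eventually_of_mem (Ioc_mem_nhdsGT zero_lt_one) key)
  linarith

variable [CompleteSpace E]

theorem hasDerivAt_comp_add_smul {f : E → ℝ} {x d : E} {t : ℝ}
    (hf : DifferentiableAt ℝ f (x + t • d)) :
    HasDerivAt (fun s : ℝ => f (x + s • d)) ⟪gradient f (x + t • d), d⟫_ℝ t := by
  simpa [Function.comp_def] using
    hf.hasGradientAt.hasFDerivAt.comp_hasDerivAt t (((hasDerivAt_id t).smul_const d).const_add x)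

theorem le_add_inner_gradient_add_of_lipschitz_gradient {f : E → ℝ} {K : ℝ}
    (hf : Differentiable ℝ f) (hK : ∀ a b, ‖gradient f a - gradient f b‖ ≤ K * ‖a - b‖)
    (a b : E) : f b ≤ f a + ⟪gradient f a, b - a⟫_ℝ + K / 2 * ‖b - a‖ ^ 2 := by
  set d := b - a
  let h : ℝ → ℝ := fun t =>
    f (a + t • d) - t * ⟪gradient f a, d⟫_ℝ - K / 2 * t ^ 2 * ‖d‖ ^ 2
  have hh : ∀ t, HasDerivAt h
      (⟪gradient f (a + t • d) - gradient f a, d⟫_ℝ - K * t * ‖d‖ ^ 2) t := fun t => by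
    have := (((hasDerivAt_comp_add_smul (x := a) (d := d) (hf _)).sub
      ((hasDerivAt_id t).mul_const ⟪gradient f a, d⟫_ℝ)).sub
      (((hasDerivAt_pow 2 t).const_mul (K / 2)).mul_const (‖d‖ ^ 2)))
    refine this.congr_deriv ?_
    rw [inner_sub_left]
    push_cast
    ring
  -- `h' ≤ 0` on `[0, 1]` by Cauchy–Schwarz and the Lipschitz bound
  have hanti : AntitoneOn h (Icc 0 1) := by
    refine antitoneOn_of_hasDerivWithinAt_nonpos (convex_Icc 0 1)
      (fun t _ => (hh t).continuousAt.continuousWithinAt)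
      (fun t _ => (hh t).hasDerivWithinAt) fun t ht => ?_
    rw [interior_Icc] at ht
    rw [sub_nonpos]
    calc ⟪gradient f (a + t • d) - gradient f a, d⟫_ℝ
        ≤ ‖gradient f (a + t • d) - gradient f a‖ * ‖d‖ := real_inner_le_norm _ _
      _ ≤ K * ‖a + t • d - a‖ * ‖d‖ := by gcongr; exact hK _ _
      _ = K * t * ‖d‖ ^ 2 := by
        rw [add_sub_cancel_left, norm_smul, Real.norm_of_nonneg ht.1.le]; ring
  have := hanti (left_mem_Icc.2 zero_le_one) (right_mem_Icc.2 zero_le_one) zero_le_one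
  simp only [h, zero_smul, add_zero, one_smul, d, add_sub_cancel] at this
  linarith

theorem StrongConvexOn.add_inner_gradient_add_le {Q : E → ℝ} {m : ℝ}
    (hQm : StrongConvexOn univ m Q) (hQ : Differentiable ℝ Q) (x y : E) :
    Q x + ⟪gradient Q x, y - x⟫_ℝ + m / 2 * ‖y - x‖ ^ 2 ≤ Q y := by
  set d := y - x
  let h : ℝ → ℝ := fun t => Q (x + t • d) - m / 2 * ‖x + t • d‖ ^ 2
  have hline : HasDerivAt (fun t : ℝ => x + t • d) d 0 := by
    simpa using ((hasDerivAt_id (0 : ℝ)).smul_const d).const_add x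
  have hh : HasDerivAt h (⟪gradient Q x, d⟫_ℝ - m / 2 * (2 * ⟪x, d⟫_ℝ)) 0 := by
    have hQline := hasDerivAt_comp_add_smul (x := x) (d := d) (t := 0) (hQ _)
    rw [zero_smul, add_zero] at hQline
    exact (hQline.sub (hline.norm_sq.const_mul (m / 2))).congr_deriv (by simp)
  have hconv' : ConvexOn ℝ univ h := by
    refine ((strongConvexOn_iff_convex.1 hQm).comp_affineMap (AffineMap.lineMap x y)).congr
      fun t _ => ?_
    simp [h, d, AffineMap.lineMap_apply_module', add_comm]
  have := hconv'.le_slope_of_hasDerivAt (mem_univ 0) (mem_univ 1) zero_lt_one hh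
  rw [slope_def_field] at this
  have hy : ‖y‖ ^ 2 = ‖x‖ ^ 2 + 2 * ⟪x, d⟫_ℝ + ‖d‖ ^ 2 := by
    rw [← norm_add_sq_real, add_sub_cancel]
  simp only [h, zero_smul, add_zero, one_smul, d, add_sub_cancel, sub_zero, div_one] at this
  rw [hy] at this
  linarith

end Calculus

theorem abs_le_norm_gradient_of_forall_le_add_sum_mul_abs {ι : Type*} [Fintype ι]
    [DecidableEq ι] {Q : EuclideanSpace ℝ ι → ℝ} {c : ι → ℝ} {x : EuclideanSpace ℝ ι}
    (hQ : DifferentiableAt ℝ Q x) (hx : ∀ z, Q x + ∑ j, c j * |x j| ≤ Q z + ∑ j, c j * |z j|)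
    {i : ι} (hi : x i ≠ 0) : |c i| ≤ ‖gradient Q x‖ := by
  set e : EuclideanSpace ℝ ι := EuclideanSpace.single i 1
  have hsum : ∀ t : ℝ, ∑ j, c j * |(x + t • e) j| =
      ∑ j, c j * |x j| + c i * (|x i + t| - |x i|) := fun t => by
    rw [← sub_eq_iff_eq_add', ← Finset.sum_sub_distrib, Finset.sum_eq_single i]
    · simp [e]; ring
    · intro j _ hj; simp [e, hj]
    · simp
  let ψ : ℝ → ℝ := fun t => Q (x + t • e) + c i * |x i + t|
  have hmin : IsLocalMin ψ 0 := Filter.Eventually.of_forall fun t => by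
    have := hx (x + t • e)
    rw [hsum] at this
    simp only [ψ, zero_smul, add_zero]
    linarith
  have hQe : HasDerivAt (fun t : ℝ => Q (x + t • e)) ⟪gradient Q x, e⟫_ℝ 0 := by
    simpa using hasDerivAt_comp_add_smul (x := x) (d := e) (t := 0) (by simpa using hQ)
  have habs : HasDerivAt (fun t : ℝ => |x i + t|) (SignType.sign (x i)) 0 :=
    HasDerivAt.comp_const_add (x i) 0 (by simpa using hasDerivAt_abs hi)
  have h0 := hmin.hasDerivAt_eq_zero (hQe.add (habs.const_mul (c i)))
  have hsign : |(SignType.sign (x i) : ℝ)| = 1 := by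
    rcases hi.lt_or_gt with h | h <;> simp [h]
  have hgrad : gradient Q x i = -(c i * SignType.sign (x i)) := by
    have := eq_neg_of_add_eq_zero_left h0
    rwa [EuclideanSpace.inner_single_right, one_mul, conj_trivial] at this
  calc |c i| = |gradient Q x i| := by rw [hgrad, abs_neg, abs_mul, hsign, mul_one]
    _ ≤ ‖gradient Q x‖ := by simpa using PiLp.norm_apply_le (gradient Q x) i

theorem rpow_le_rpow_add_mul_sub {p a b : ℝ} (hp0 : 0 ≤ p) (hp1 : p ≤ 1) (ha : 0 < a)
    (hb : 0 ≤ b) : b ^ p ≤ a ^ p + p * a ^ (p - 1) * (b - a) := by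
  have hba : 0 ≤ b / a := div_nonneg hb ha.le
  have hbern := rpow_one_add_le_one_add_mul_self (by linarith : -1 ≤ b / a - 1) hp0 hp1
  rw [add_sub_cancel] at hbern
  have hap : a ^ (p - 1) * a = a ^ p := by
    rw [← Real.rpow_add_one ha.ne', sub_add_cancel]
  calc b ^ p = a ^ p * (b / a) ^ p := by
        rw [← Real.mul_rpow ha.le hba, mul_div_cancel₀ _ ha.ne']
    _ ≤ a ^ p * (1 + p * (b / a - 1)) := by gcongr
    _ = a ^ p + p * a ^ (p - 1) * (b - a) := by rw [← hap]; field_simp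

theorem rpow_abs_add_le_add_wfun_mul {p x y e e' : ℝ} (hp0 : 0 ≤ p) (hp1 : p ≤ 1) (he : 0 < e)
    (he' : 0 ≤ e') (hle : e' ≤ e) :
    (|y| + e') ^ p ≤ (|x| + e) ^ p + wfun p x e * (|y| - |x|) := by
  have hw : 0 ≤ wfun p x e := by unfold wfun; positivity
  calc (|y| + e') ^ p ≤ (|x| + e) ^ p + wfun p x e * (|y| + e' - (|x| + e)) :=
        rpow_le_rpow_add_mul_sub hp0 hp1 (by positivity) (by positivity)
    _ ≤ (|x| + e) ^ p + wfun p x e * (|y| - |x|) := by gcongr (|x| + e) ^ p + _ * ?_; linarith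

theorem convexOn_sum_mul_abs {ι : Type*} [Fintype ι] {c : ι → ℝ} (hc : ∀ i, 0 ≤ c i) :
    ConvexOn ℝ univ (fun z : EuclideanSpace ℝ ι => ∑ i, c i * |z i|) := by
  have h := Finset.sum_induction (s := Finset.univ)
    (fun i (z : EuclideanSpace ℝ ι) => c i * |z i|) (ConvexOn ℝ univ)
    (fun _ _ => ConvexOn.add) (convexOn_const 0 convex_univ)
    fun i _ => ((convexOn_norm convex_univ).comp_linearMap
      (EuclideanSpace.proj i : EuclideanSpace ℝ ι →L[ℝ] ℝ).toLinearMap).smul (hc i)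
  simpa only [Finset.sum_fn] using h

theorem frequently_mem_Icc_of_frequently_lt_of_frequently_gt {g : ℕ → ℝ} {a b : ℝ}
    (hstep : ∀ᶠ k in atTop, g (k + 1) < g k + (b - a))
    (hlo : ∃ᶠ k in atTop, g k < a) (hhi : ∃ᶠ k in atTop, b < g k) :
    ∃ᶠ k in atTop, g k ∈ Icc a b := by
  by_contra hcon
  obtain ⟨N, hN⟩ := eventually_atTop.1 (hstep.and (not_frequently.1 hcon))
  obtain ⟨k₀, hk₀N, hk₀⟩ := frequently_atTop.1 hlo N
  -- unable to jump over `[a, b]`, the sequence stays below `a`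
  have hbelow : ∀ k, k₀ ≤ k → g k < a := by
    intro k hk
    induction k, hk using Nat.le_induction with
    | base => exact hk₀
    | succ k hk ih =>
      have hout := (hN (k + 1) (by omega)).2
      rw [mem_Icc, not_and_or, not_le, not_le] at hout
      exact hout.resolve_right fun h => by linarith [(hN k (by omega)).1]
  obtain ⟨k, hk, hgk⟩ := frequently_atTop.1 hhi (k₀ + 1)
  obtain ⟨j, rfl⟩ : ∃ j, k = j + 1 := ⟨k - 1, by omega⟩
  linarith [hbelow j (by omega), (hN j (by omega)).1]

section ClusterPoints

variable {α : Type*} [MetricSpace α] {u : ℕ → α} {K : Set α}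

theorem isCompact_setOf_mapClusterPt (hK : IsCompact K) (huK : ∀ k, u k ∈ K) :
    IsCompact {z | MapClusterPt z atTop u} :=
  hK.of_isClosed_subset isClosed_setOfPred_clusterPt fun _ hz =>
    hK.isClosed.mem_of_mapClusterPt hz (Eventually.of_forall huK)

theorem nonempty_setOf_mapClusterPt (hK : IsCompact K) (huK : ∀ k, u k ∈ K) :
    {z | MapClusterPt z atTop u}.Nonempty :=
  let ⟨z, _, hz⟩ := hK.exists_mapClusterPt (tendsto_principal.2 (Eventually.of_forall huK))
  ⟨z, hz⟩

theorem IsCompact.exists_pos_forall_le_infDist {s t : Set α} (hs : IsCompact s)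
    (ht : IsClosed t) (htne : t.Nonempty) (hst : Disjoint s t) :
    ∃ δ, 0 < δ ∧ ∀ y ∈ s, δ ≤ infDist y t :=
  hs.exists_forall_le' (continuous_infDist_pt t).continuousOn fun _ hy =>
    (ht.notMem_iff_infDist_pos htne).1 (hst.notMem_of_mem_left hy)

theorem isPreconnected_setOf_mapClusterPt (hK : IsCompact K) (huK : ∀ k, u k ∈ K)
    (hstep : Tendsto (fun k => dist (u (k + 1)) (u k)) atTop (𝓝 0)) :
    IsPreconnected {z | MapClusterPt z atTop u} := by
  set Ω := {z | MapClusterPt z atTop u}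
  have hΩ : IsCompact Ω := isCompact_setOf_mapClusterPt hK huK
  rw [isPreconnected_iff_subset_of_fully_disjoint_closed hΩ.isClosed]
  intro A B hA hB hcover hdisj
  by_contra! hsplit
  obtain ⟨b, hbΩ, hbA⟩ := not_subset.1 hsplit.1
  obtain ⟨a, haΩ, haB⟩ := not_subset.1 hsplit.2
  have haA : a ∈ Ω ∩ A := ⟨haΩ, (hcover haΩ).resolve_right haB⟩
  have hbB : b ∈ Ω ∩ B := ⟨hbΩ, (hcover hbΩ).resolve_left hbA⟩
  obtain ⟨δ, hδ, hδB⟩ := (hΩ.inter_right hB).exists_pos_forall_le_infDist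
    (hΩ.isClosed.inter hA) ⟨a, haA⟩ (hdisj.symm.mono inter_subset_right inter_subset_right)
  -- the distance to `Ω ∩ A` along the sequence is frequently below `δ / 3` (near `a`),
  -- frequently above `2δ / 3` (near `b`), and eventually moves by less than `δ / 3`
  set g : ℕ → ℝ := fun k => infDist (u k) (Ω ∩ A)
  have hlo : ∃ᶠ k in atTop, g k < δ / 3 :=
    (haΩ.frequently (ball_mem_nhds a (by positivity : 0 < δ / 3))).mono fun k hk =>
      (infDist_le_dist_of_mem haA).trans_lt hk
  have hhi : ∃ᶠ k in atTop, 2 * δ / 3 < g k :=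
    (hbΩ.frequently (ball_mem_nhds b (by positivity : 0 < δ / 3))).mono fun k hk => by
      have := (infDist_le_infDist_add_dist (x := b) (y := u k) (s := Ω ∩ A)).trans'
        (hδB b hbB)
      rw [dist_comm] at hk
      linarith
  have hmove : ∀ᶠ k in atTop, g (k + 1) < g k + (2 * δ / 3 - δ / 3) :=
    (hstep.eventually (gt_mem_nhds (by positivity : 0 < δ / 3))).mono fun k hk => by
      have := infDist_le_infDist_add_dist (x := u (k + 1)) (y := u k) (s := Ω ∩ A)
      linarith
  obtain ⟨z, ⟨-, hzg⟩, hz⟩ := (hK.inter_right (isClosed_Icc.preimage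
    (continuous_infDist_pt (Ω ∩ A)))).exists_mapClusterPt_of_frequently
    ((frequently_mem_Icc_of_frequently_lt_of_frequently_gt hmove hlo hhi).mono
      fun k hk => ⟨huK k, hk⟩)
  rcases hcover hz with hzA | hzB
  · have := infDist_zero_of_mem (show z ∈ Ω ∩ A from ⟨hz, hzA⟩)
    linarith [hzg.1]
  · linarith [hzg.2, hδB z ⟨hz, hzB⟩]

end ClusterPoints

theorem exists_eventually_sign_eq {u : ℕ → ℝ} {γ : ℝ} (hγ : 0 < γ)
    (hgap : ∀ᶠ k in atTop, u (k + 1) ≠ 0 → 2 * γ ≤ |u k|)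
    (hstep : ∀ᶠ k in atTop, |u (k + 1) - u k| < γ) :
    ∃ s, ∀ᶠ k in atTop, Real.sign (u k) = s ∧ (u k = 0 ∨ γ ≤ |u k|) := by
  obtain ⟨N, hN⟩ := eventually_atTop.1 (hgap.and hstep)
  have hnext : ∀ k, N ≤ k → u (k + 1) ≠ 0 →
      γ ≤ |u (k + 1)| ∧ Real.sign (u (k + 1)) = Real.sign (u k) := by
    intro k hk hne
    have hbig := (hN k hk).1 hne
    have hclose := abs_sub_lt_iff.1 (hN k hk).2
    rcases le_abs'.1 hbig with h | h
    · rw [abs_of_neg (by linarith), Real.sign_of_neg (by linarith),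
        Real.sign_of_neg (by linarith)]
      exact ⟨by linarith, rfl⟩
    · rw [abs_of_pos (by linarith), Real.sign_of_pos (by linarith),
        Real.sign_of_pos (by linarith)]
      exact ⟨by linarith, rfl⟩
  by_cases hzero : ∃ m, N ≤ m ∧ u m = 0
  · -- by `hgap`, once zero the sequence stays zero
    obtain ⟨m, hm, hum⟩ := hzero
    have hstay : ∀ k, m ≤ k → u k = 0 := by
      intro k hk
      induction k, hk using Nat.le_induction with
      | base => exact hum
      | succ k hk ih =>
        by_contra hne
        have := (hN k (by omega)).1 hne
        rw [ih, abs_zero] at this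
        linarith
    exact ⟨0, eventually_atTop.2 ⟨m, fun k hk => by simp [hstay k hk]⟩⟩
  · push Not at hzero
    have hsign : ∀ k, N ≤ k → Real.sign (u k) = Real.sign (u N) := by
      intro k hk
      induction k, hk using Nat.le_induction with
      | base => rfl
      | succ k hk ih => exact (hnext k hk (hzero _ (by omega))).2.trans ih
    refine ⟨Real.sign (u N), eventually_atTop.2 ⟨N + 1, fun k hk => ?_⟩⟩
    obtain ⟨j, rfl⟩ : ∃ j, k = j + 1 := ⟨k - 1, by omega⟩
    exact ⟨hsign _ (by omega), Or.inr (hnext j (by omega) (hzero _ (by omega))).1⟩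

theorem Real.sign_eq_of_mapClusterPt {u : ℕ → ℝ} {t s γ : ℝ} (hγ : 0 < γ)
    (hu : ∀ᶠ k in atTop, Real.sign (u k) = s ∧ (u k = 0 ∨ γ ≤ |u k|))
    (ht : MapClusterPt t atTop u) : Real.sign t = s := by
  have hnear : ∀ᶠ y in 𝓝 t, (y = 0 ∨ γ ≤ |y|) → Real.sign y = Real.sign t := by
    rcases lt_trichotomy t 0 with h | rfl | h
    · filter_upwards [eventually_lt_nhds h] with y hy _
      rw [Real.sign_of_neg hy, Real.sign_of_neg h]
    · filter_upwards [ball_mem_nhds 0 hγ] with y hy hgap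
      rw [mem_ball, dist_zero_right, Real.norm_eq_abs] at hy
      rw [hgap.resolve_right hy.not_ge]
    · filter_upwards [eventually_gt_nhds h] with y hy _
      rw [Real.sign_of_pos hy, Real.sign_of_pos h]
  obtain ⟨k, hk, hks, hkgap⟩ := ((ht.frequently hnear).and_eventually hu).exists
  exact hks ▸ (hk hkgap).symm

theorem mem_clusterSet_iff {n : ℕ} {x : ℕ → EuclideanSpace ℝ (Fin n)}
    {z : EuclideanSpace ℝ (Fin n)} : z ∈ clusterSet x ↔ MapClusterPt z atTop x :=
  ⟨fun ⟨_, hφ, hz⟩ => hz.mapClusterPt.of_comp hφ.tendsto_atTop,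
    MapClusterPt.tendsto_subseq⟩

theorem clusterSet_eq_setOf_mapClusterPt {n : ℕ} (x : ℕ → EuclideanSpace ℝ (Fin n)) :
    clusterSet x = {z | MapClusterPt z atTop x} :=
  Set.ext fun _ => mem_clusterSet_iff

theorem wfun_pos {p t e : ℝ} (hp : 0 < p) (he : 0 < e) : 0 < wfun p t e := by
  unfold wfun
  positivity

namespace IRL1

variable {n : ℕ} (S : IRL1 n)

theorem eps_succ_le (k : ℕ) (i : Fin n) : S.eps (k + 1) i ≤ S.eps k i :=
  (S.heps_dec k i).trans (mul_le_of_le_one_left (S.heps_pos k i).le S.hmu1.le)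

theorem eps_le_pow_mul (k : ℕ) (i : Fin n) : S.eps k i ≤ S.mu ^ k * S.eps 0 i := by
  induction k with
  | zero => simp
  | succ k ih =>
    calc S.eps (k + 1) i ≤ S.mu * S.eps k i := S.heps_dec k i
      _ ≤ S.mu * (S.mu ^ k * S.eps 0 i) := by gcongr; exact S.hmu0.le
      _ = S.mu ^ (k + 1) * S.eps 0 i := by ring

theorem tendsto_eps : Tendsto S.eps atTop (𝓝 0) := by
  refine tendsto_pi_nhds.2 fun i =>
    squeeze_zero (fun k => (S.heps_pos k i).le) (S.eps_le_pow_mul · i) ?_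
  simpa using (tendsto_pow_atTop_nhds_zero_of_lt_one S.hmu0.le S.hmu1).mul_const (S.eps 0 i)

theorem strongConvexOn_G (k : ℕ) : StrongConvexOn univ S.M (S.G k) := by
  refine strongConvexOn_iff_convex.2 (((S.hQ_sconv k).add
    (convexOn_sum_mul_abs (c := fun i => S.lam * wfun S.p (S.x k i) (S.eps k i)) fun i =>
      (mul_pos S.hlam (wfun_pos S.hp0 (S.heps_pos k i))).le)).congr fun z _ => ?_)
  simp only [IRL1.G, Pi.add_apply, Finset.mul_sum, mul_assoc]
  ring

theorem G_succ_add_le (k : ℕ) :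
    S.G k (S.x (k + 1)) + S.M / 2 * ‖S.x k - S.x (k + 1)‖ ^ 2 ≤ S.G k (S.x k) :=
  (S.strongConvexOn_G k).add_sq_norm_sub_le_of_forall_le (S.hmin k) (S.x k)

theorem Feps_succ_le (k : ℕ) :
    S.Feps (S.x (k + 1)) (S.eps (k + 1)) ≤
      S.Feps (S.x k) (S.eps k) - (S.M - S.Lf / 2) * ‖S.x (k + 1) - S.x k‖ ^ 2 := by
  have hpen : S.lam * ∑ i, (|S.x (k + 1) i| + S.eps (k + 1) i) ^ S.p ≤
      S.lam * ∑ i, (|S.x k i| + S.eps k i) ^ S.p +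
        (S.lam * ∑ i, wfun S.p (S.x k i) (S.eps k i) * |S.x (k + 1) i| -
          S.lam * ∑ i, wfun S.p (S.x k i) (S.eps k i) * |S.x k i|) := by
    rw [← mul_sub, ← mul_add, ← Finset.sum_sub_distrib, ← Finset.sum_add_distrib]
    gcongr with i
    · exact S.hlam.le
    rw [← mul_sub]
    exact rpow_abs_add_le_add_wfun_mul S.hp0.le S.hp1.le (S.heps_pos k i)
      (S.heps_pos _ i).le (S.eps_succ_le k i)
  have hf := le_add_inner_gradient_add_of_lipschitz_gradient S.hf_diff S.hf_lip
    (S.x k) (S.x (k + 1))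
  have hQ := (strongConvexOn_iff_convex.2 (S.hQ_sconv k)).add_inner_gradient_add_le
    (S.hQ_diff k) (S.x k) (S.x (k + 1))
  have hG := S.G_succ_add_le k
  rw [S.hQ_grad k] at hQ
  rw [norm_sub_rev] at hG
  simp only [IRL1.G] at hG
  simp only [IRL1.Feps]
  -- the `Q_k`-terms and the weighted `ℓ¹`-terms cancel in the sum of the four inequalities
  linarith

theorem Fobj_le_Feps (z : EuclideanSpace ℝ (Fin n)) {e : Fin n → ℝ} (he : 0 ≤ e) :
    S.Fobj z ≤ S.Feps z e := by
  unfold IRL1.Fobj IRL1.Feps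
  gcongr with i
  · exact S.hlam.le
  · exact S.hp0.le
  · exact le_add_of_nonneg_right (he i)

theorem Feps_zero (z : EuclideanSpace ℝ (Fin n)) : S.Feps z 0 = S.Fobj z := by
  simp [IRL1.Feps, IRL1.Fobj]

theorem continuous_Feps :
    Continuous fun q : EuclideanSpace ℝ (Fin n) × (Fin n → ℝ) => S.Feps q.1 q.2 := by
  unfold IRL1.Feps
  refine (S.hf_diff.continuous.comp continuous_fst).add
    (continuous_const.mul (continuous_finsetSum _ fun i _ => ?_))
  exact (Real.continuous_rpow_const S.hp0.le).comp (by fun_prop)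

theorem continuous_Fobj : Continuous S.Fobj := by
  have := S.continuous_Feps.comp (continuous_id.prodMk continuous_const :
    Continuous fun z : EuclideanSpace ℝ (Fin n) => (z, (0 : Fin n → ℝ)))
  simpa only [Function.comp_def, S.Feps_zero, id] using this

theorem antitone_Feps : Antitone fun k => S.Feps (S.x k) (S.eps k) :=
  antitone_nat_of_succ_le fun k => (S.Feps_succ_le k).trans
    (sub_le_self _ (mul_nonneg (by linarith [S.hM, S.hLf]) (sq_nonneg _)))

theorem Fobj_x_le (k : ℕ) : S.Fobj (S.x k) ≤ S.Feps (S.x 0) (S.eps 0) :=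
  (S.Fobj_le_Feps _ fun i => (S.heps_pos k i).le).trans (S.antitone_Feps (Nat.zero_le k))

theorem isCompact_levelSet (hbdd : S.LevelBounded) :
    IsCompact {z | S.Fobj z ≤ S.Feps (S.x 0) (S.eps 0)} :=
  isCompact_of_isClosed_isBounded (isClosed_le S.continuous_Fobj continuous_const) hbdd

theorem exists_tendsto_Feps (hbdd : S.LevelBounded) :
    ∃ ℓ, Tendsto (fun k => S.Feps (S.x k) (S.eps k)) atTop (𝓝 ℓ) := by
  obtain ⟨C, hC⟩ := (S.isCompact_levelSet hbdd).bddBelow_image S.continuous_Fobj.continuousOn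
  refine ⟨_, tendsto_atTop_ciInf S.antitone_Feps ⟨C, ?_⟩⟩
  rintro _ ⟨k, rfl⟩
  exact (hC ⟨S.x k, S.Fobj_x_le k, rfl⟩).trans (S.Fobj_le_Feps _ fun i => (S.heps_pos k i).le)

theorem tendsto_dist_succ (hbdd : S.LevelBounded) :
    Tendsto (fun k => dist (S.x (k + 1)) (S.x k)) atTop (𝓝 0) := by
  obtain ⟨ℓ, hℓ⟩ := S.exists_tendsto_Feps hbdd
  have hc : 0 < S.M - S.Lf / 2 := by linarith [S.hM]
  have hdrop : Tendsto (fun k => (S.Feps (S.x k) (S.eps k) -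
      S.Feps (S.x (k + 1)) (S.eps (k + 1))) / (S.M - S.Lf / 2)) atTop (𝓝 0) := by
    simpa using (hℓ.sub (hℓ.comp (tendsto_add_atTop_nat 1))).div_const (S.M - S.Lf / 2)
  have hsq : Tendsto (fun k => dist (S.x (k + 1)) (S.x k) ^ 2) atTop (𝓝 0) :=
    squeeze_zero (fun _ => sq_nonneg _) (fun k => by
      rw [le_div_iff₀ hc, dist_eq_norm]
      linarith [S.Feps_succ_le k]) hdrop
  simpa using hsq.sqrt

theorem exists_norm_gradient_le (hbdd : S.LevelBounded) :
    ∃ C, 0 < C ∧ ∀ k, ‖gradient (S.Q k) (S.x (k + 1))‖ ≤ C := by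
  obtain ⟨R, hR⟩ := hbdd.exists_norm_le
  have hx : ∀ k, ‖S.x k‖ ≤ R := fun k => hR _ (S.Fobj_x_le k)
  have hR0 : 0 ≤ R := (norm_nonneg _).trans (hx 0)
  refine ⟨|S.L| * (2 * R) + S.Lf * R + ‖gradient S.f 0‖ + 1, by positivity [S.hLf],
    fun k => ?_⟩
  have hQ := S.hQ_lip k (S.x (k + 1)) (S.x k)
  have hf := S.hf_lip (S.x k) 0
  rw [S.hQ_grad k] at hQ
  rw [sub_zero] at hf
  have hstep : S.L * ‖S.x (k + 1) - S.x k‖ ≤ |S.L| * (2 * R) :=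
    calc S.L * ‖S.x (k + 1) - S.x k‖ ≤ |S.L| * ‖S.x (k + 1) - S.x k‖ := by
          gcongr; exact le_abs_self _
      _ ≤ |S.L| * (‖S.x (k + 1)‖ + ‖S.x k‖) := by gcongr; exact norm_sub_le _ _
      _ ≤ |S.L| * (2 * R) := by gcongr; linarith [hx k, hx (k + 1)]
  have := mul_le_mul_of_nonneg_left (hx k) S.hLf
  linarith [norm_le_norm_add_norm_sub' (gradient (S.Q k) (S.x (k + 1))) (gradient S.f (S.x k)),
    norm_le_norm_add_norm_sub' (gradient S.f (S.x k)) (gradient S.f 0)]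

theorem exists_le_abs_add_eps (hbdd : S.LevelBounded) :
    ∃ c, 0 < c ∧ ∀ k i, S.x (k + 1) i ≠ 0 → c ≤ |S.x k i| + S.eps k i := by
  obtain ⟨C, hC0, hC⟩ := S.exists_norm_gradient_le hbdd
  have hlp : 0 < S.lam * S.p := mul_pos S.hlam S.hp0
  refine ⟨(C / (S.lam * S.p)) ^ (S.p - 1)⁻¹, by positivity, fun k i hi => ?_⟩
  have ha : 0 < |S.x k i| + S.eps k i := add_pos_of_nonneg_of_pos (abs_nonneg _) (S.heps_pos k i)
  have hopt := abs_le_norm_gradient_of_forall_le_add_sum_mul_abs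
    (c := fun j => S.lam * wfun S.p (S.x k j) (S.eps k j)) ((S.hQ_diff k) _)
    (fun z => by simpa only [Finset.mul_sum, mul_assoc] using S.hmin k z) hi
  rw [abs_of_pos (mul_pos S.hlam (wfun_pos S.hp0 (S.heps_pos k i))), wfun] at hopt
  rw [Real.rpow_inv_le_iff_of_neg (by positivity) ha (by linarith [S.hp1]), le_div_iff₀ hlp]
  calc _ = S.lam * (S.p * (|S.x k i| + S.eps k i) ^ (S.p - 1)) := by ring
    _ ≤ C := hopt.trans (hC k)

theorem exists_sign_eq (hbdd : S.LevelBounded) (i : Fin n) :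
    ∃ s, ∀ z ∈ clusterSet S.x, Real.sign (z i) = s := by
  obtain ⟨c, hc, hthr⟩ := S.exists_le_abs_add_eps hbdd
  have hgap : ∀ᶠ k in atTop, S.x (k + 1) i ≠ 0 → 2 * (c / 4) ≤ |S.x k i| :=
    ((tendsto_pi_nhds.1 S.tendsto_eps i).eventually
      (gt_mem_nhds (by positivity : 0 < c / 2))).mono fun k hk hne => by linarith [hthr k i hne]
  have hstep : ∀ᶠ k in atTop, |S.x (k + 1) i - S.x k i| < c / 4 :=
    ((S.tendsto_dist_succ hbdd).eventually (gt_mem_nhds (by positivity))).mono fun k hk =>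
      (PiLp.dist_apply_le _ _ i).trans_lt hk
  obtain ⟨s, hs⟩ := exists_eventually_sign_eq (u := fun k => S.x k i) (by positivity) hgap hstep
  exact ⟨s, fun z hz => Real.sign_eq_of_mapClusterPt (by positivity) hs
    ((mem_clusterSet_iff.1 hz).continuousAt_comp (PiLp.continuous_apply 2 _ i).continuousAt)⟩

theorem exists_Fobj_eq (hbdd : S.LevelBounded) :
    ∃ ℓ, ∀ z ∈ clusterSet S.x, S.Fobj z = ℓ := by
  obtain ⟨ℓ, hℓ⟩ := S.exists_tendsto_Feps hbdd
  refine ⟨ℓ, fun z ⟨φ, hφ, hz⟩ => ?_⟩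
  rw [← S.Feps_zero]
  exact tendsto_nhds_unique ((S.continuous_Feps.tendsto _).comp
    (hz.prodMk_nhds (S.tendsto_eps.comp hφ.tendsto_atTop))) (hℓ.comp hφ.tendsto_atTop)

end IRL1

/-- In the IRL1 setting with bounded level set, either `{x^k}`
converges (unique limit point), or the set `Ω` of its limit points is a compact
connected set all of whose elements have the same sign pattern, on which the
objective `F(x) = f(x) + λ Σᵢ |xᵢ|^p` is constant. -/
theorem stmt13 {n : ℕ} (S : IRL1 n) (hbdd : S.LevelBounded) :
    (∃ xstar : EuclideanSpace ℝ (Fin n), Tendsto S.x atTop (nhds xstar)) ∨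
    (IsCompact (clusterSet S.x) ∧ IsConnected (clusterSet S.x) ∧
      (∀ a ∈ clusterSet S.x, ∀ b ∈ clusterSet S.x, ∀ i : Fin n,
        Real.sign (a i) = Real.sign (b i)) ∧
      (∀ a ∈ clusterSet S.x, ∀ b ∈ clusterSet S.x, S.Fobj a = S.Fobj b)) := by
  right
  have hK := S.isCompact_levelSet hbdd
  refine ⟨?_, ⟨?_, ?_⟩, fun a ha b hb i => ?_, fun a ha b hb => ?_⟩
  · rw [clusterSet_eq_setOf_mapClusterPt]
    exact isCompact_setOf_mapClusterPt hK S.Fobj_x_le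
  · rw [clusterSet_eq_setOf_mapClusterPt]
    exact nonempty_setOf_mapClusterPt hK S.Fobj_x_le
  · rw [clusterSet_eq_setOf_mapClusterPt]
    exact isPreconnected_setOf_mapClusterPt hK S.Fobj_x_le (S.tendsto_dist_succ hbdd)
  · obtain ⟨s, hs⟩ := S.exists_sign_eq hbdd i
    rw [hs a ha, hs b hb]
  · obtain ⟨ℓ, hℓ⟩ := S.exists_Fobj_eq hbdd
    rw [hℓ a ha, hℓ b hb]
end

section
/- In the IRL1 setting with the SR update rule and level-set boundedness, for each coordinate i: if inf_k ε_i^k > 0 (equivalently, ε_i is not updated after some iteration), then there exists k̃ ∈ ℕ such that x_i^k = 0 for all k > k̃; in particular x_i^k → 0. -/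
/-! The SR rule makes `ε_i^k` nonincreasing in `k`, and shrinks it by the factor `μ < 1` at every
step with `x_i^{k+1} ≠ 0`. If `ε_i^k ≥ c > 0`, it converges to a limit `ℓ ≥ c > 0`, and since
`μ ℓ < ℓ`, eventually `μ ε_i^k < ε_i^{k+1}`: from then on no step can have `x_i^{k+1} ≠ 0`. -/

open Filter Topology

/-- The IRL1 setting with the "smart reweighting" (SR) ε-update rule: fixed data
`p ∈ (0,1)`, `λ > 0`, `μ ∈ (0,1)`, a differentiable `f` with `Lf`-Lipschitz gradient
(`Lf ≥ 0`), iterates `x^k`, positive parameters `ε^k` updated by the SR rule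
(`ε_i^{k+1} = ε_i^k` if `x_i^{k+1} = 0`, `ε_i^{k+1} ≤ μ ε_i^k` if `x_i^{k+1} ≠ 0`),
and for each `k` a differentiable model `Q_k` with `∇Q_k(x^k) = ∇f(x^k)`,
`M`-strongly convex with `M > Lf/2` (meaning `z ↦ Q_k z - (M/2)‖z‖²` is convex),
`∇Q_k` `L`-Lipschitz, such that `x^{k+1}` globally minimizes
`G(·; x^k, ε^k) = Q_k(·) + λ Σᵢ w(xᵢ^k, εᵢ^k)|·ᵢ|`. -/
structure IRL1SR (n : ℕ) where
  p : ℝ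
  lam : ℝ
  mu : ℝ
  Lf : ℝ
  M : ℝ
  L : ℝ
  f : EuclideanSpace ℝ (Fin n) → ℝ
  x : ℕ → EuclideanSpace ℝ (Fin n)
  eps : ℕ → Fin n → ℝ
  Q : ℕ → EuclideanSpace ℝ (Fin n) → ℝ
  hp0 : 0 < p
  hp1 : p < 1
  hlam : 0 < lam
  hmu0 : 0 < mu
  hmu1 : mu < 1
  hLf : 0 ≤ Lf
  hM : Lf / 2 < M
  hf_diff : Differentiable ℝ f
  hf_lip : ∀ a b, ‖gradient f a - gradient f b‖ ≤ Lf * ‖a - b‖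
  heps_pos : ∀ k i, 0 < eps k i
  heps_SR_zero : ∀ k i, x (k + 1) i = 0 → eps (k + 1) i = eps k i
  heps_SR_nonzero : ∀ k i, x (k + 1) i ≠ 0 → eps (k + 1) i ≤ mu * eps k i
  hQ_diff : ∀ k, Differentiable ℝ (Q k)
  hQ_grad : ∀ k, gradient (Q k) (x k) = gradient f (x k)
  hQ_sconv : ∀ k, ConvexOn ℝ Set.univ (fun z => Q k z - M / 2 * ‖z‖ ^ 2)
  hQ_lip : ∀ k a b, ‖gradient (Q k) a - gradient (Q k) b‖ ≤ L * ‖a - b‖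
  hmin : ∀ k, ∀ z : EuclideanSpace ℝ (Fin n),
    Q k (x (k + 1)) + lam * ∑ i, wfun p (x k i) (eps k i) * |x (k + 1) i|
      ≤ Q k z + lam * ∑ i, wfun p (x k i) (eps k i) * |z i|

/-- The smoothed objective `F(x, ε) = f(x) + λ Σᵢ (|xᵢ| + εᵢ)^p`. -/
noncomputable def IRL1SR.Feps {n : ℕ} (S : IRL1SR n)
    (z : EuclideanSpace ℝ (Fin n)) (e : Fin n → ℝ) : ℝ :=
  S.f z + S.lam * ∑ i, (|z i| + e i) ^ S.p

/-- The objective `F(x) = f(x) + λ Σᵢ |xᵢ|^p`. -/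
noncomputable def IRL1SR.Fobj {n : ℕ} (S : IRL1SR n) (z : EuclideanSpace ℝ (Fin n)) : ℝ :=
  S.f z + S.lam * ∑ i, |z i| ^ S.p

/-- The level set `{x : F(x) ≤ F(x⁰, ε⁰)}` is bounded. -/
def IRL1SR.LevelBounded {n : ℕ} (S : IRL1SR n) : Prop :=
  Bornology.IsBounded {z : EuclideanSpace ℝ (Fin n) | S.Fobj z ≤ S.Feps (S.x 0) (S.eps 0)}

theorem Antitone.eventually_mul_lt_succ {e : ℕ → ℝ} {μ c : ℝ} (he : Antitone e) (hμ : μ < 1)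
    (hc : 0 < c) (hce : ∀ k, c ≤ e k) : ∀ᶠ k in atTop, μ * e k < e (k + 1) := by
  have hlim : Tendsto e atTop (𝓝 (⨅ k, e k)) :=
    tendsto_atTop_ciInf he ⟨c, Set.forall_mem_range.2 hce⟩
  have hpos : 0 < ⨅ k, e k := hc.trans_le (le_ciInf hce)
  exact (hlim.const_mul μ).eventually_lt ((tendsto_add_atTop_iff_nat 1).2 hlim)
    (by nlinarith)

namespace IRL1SR

variable {n : ℕ} (S : IRL1SR n)

theorem eps_succ_le (k : ℕ) (i : Fin n) : S.eps (k + 1) i ≤ S.eps k i := by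
  by_cases hx : S.x (k + 1) i = 0
  · exact (S.heps_SR_zero k i hx).le
  · exact (S.heps_SR_nonzero k i hx).trans
      (mul_le_of_le_one_left (S.heps_pos k i).le S.hmu1.le)

theorem antitone_eps (i : Fin n) : Antitone fun k => S.eps k i :=
  antitone_nat_of_succ_le fun k => S.eps_succ_le k i

theorem eventually_x_succ_eq_zero {i : Fin n} {c : ℝ} (hc : 0 < c)
    (hce : ∀ k, c ≤ S.eps k i) : ∀ᶠ k in atTop, S.x (k + 1) i = 0 := by
  filter_upwards [(S.antitone_eps i).eventually_mul_lt_succ S.hmu1 hc hce] with k hk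
  by_contra hx
  exact (S.heps_SR_nonzero k i hx).not_gt hk

end IRL1SR

theorem stmt16_general {n : ℕ} (S : IRL1SR n) (i : Fin n)
    (h : ∃ c > (0 : ℝ), ∀ k : ℕ, c ≤ S.eps k i) :
    (∃ kt : ℕ, ∀ k > kt, S.x k i = 0) ∧
    Tendsto (fun k => S.x k i) atTop (nhds 0) := by
  obtain ⟨c, hc, hce⟩ := h
  obtain ⟨kt, hkt⟩ := eventually_atTop.1 (S.eventually_x_succ_eq_zero hc hce)
  have hzero : ∀ k > kt, S.x k i = 0 := fun k hk => by
    obtain ⟨j, rfl⟩ := Nat.exists_eq_add_of_lt hk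
    exact hkt (kt + j) (Nat.le_add_right kt j)
  refine ⟨⟨kt, hzero⟩, tendsto_const_nhds.congr' ?_⟩
  filter_upwards [eventually_gt_atTop kt] with k hk
  exact (hzero k hk).symm

/-- In the IRL1 setting with the SR update rule and bounded level
set, for each coordinate `i`: if `inf_k ε_i^k > 0`, then there is `k̃` with
`x_i^k = 0` for all `k > k̃`; in particular `x_i^k → 0`. -/
theorem stmt16 {n : ℕ} (S : IRL1SR n) (hbdd : S.LevelBounded) (i : Fin n)
    (h : ∃ c > (0 : ℝ), ∀ k : ℕ, c ≤ S.eps k i) :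
    (∃ kt : ℕ, ∀ k > kt, S.x k i = 0) ∧
    Tendsto (fun k => S.x k i) atTop (nhds 0) :=
  stmt16_general S i h
end
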